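/- arXiv:2402.11464 — 7 statements merged into one kernel-verified Lean document; each statement's English description precedes it below -/
import Mathlib

section
/- If v is a component additive value function, then the Harsanyi dividend λ_{g'}(v) = 0 for any network g' that contains two links belonging to two different components of g'. -/
open Finset

variable {n : ℕ}

/-- A network on player set `Fin n`: a finite set of (unordered) links. -/
abbrev Network (n : ℕ) := Finset (Sym2 (Fin n))

/-- The set of non-isolated players of a network. -/
def players (g : Network n) : Finset (Fin n) :=
  Finset.univ.filter (fun i => ∃ e ∈ g, i ∈ e)

/-- Harsanyi dividend of a value function at a network. -/
noncomputable def dividend (v : Network n → ℝ) (g' : Network n) : ℝ :=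
  ∑ g'' ∈ g'.powerset, (-1 : ℝ) ^ (g'.card - g''.card) * v g''

/-- The weighted Myerson value. -/
noncomputable def wMV (w : Fin n → ℝ) (v : Network n → ℝ) (g : Network n) (i : Fin n) : ℝ :=
  ∑ g' ∈ g.powerset.filter (fun g' => i ∈ players g'),
    (w i / ∑ j ∈ players g', w j) * dividend v g'

/-- Connectivity of two players through links of `g`. -/
def connectedIn (g : Network n) (i j : Fin n) : Prop :=
  Relation.ReflTransGen (fun a b => s(a, b) ∈ g) i j

open Classical in
/-- The component of `g` containing the link `e`. -/
noncomputable def component (g : Network n) (e : Sym2 (Fin n)) : Network n :=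
  g.filter (fun e' => ∃ i ∈ e, ∃ j ∈ e', connectedIn g i j)

/-- The set of components (maximal connected subnetworks) of `g`. -/
noncomputable def components (g : Network n) : Finset (Network n) :=
  g.image (component g)

/-- Component additive value functions. -/
def componentAdditive (v : Network n → ℝ) : Prop :=
  ∀ g : Network n, v g = ∑ h ∈ components g, v h

open Classical in
/-- The restriction `g|_S` of a network to a coalition `S`. -/
noncomputable def restrict (g : Network n) (S : Finset (Fin n)) : Network n :=
  g.filter (fun e => ∀ i ∈ e, i ∈ S)

/-- The set `g_i` of links of player `i` in `g`. -/
def glinks (g : Network n) (i : Fin n) : Network n :=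
  g.filter (fun e => i ∈ e)

/-! ### Auxiliary lemmas -/

lemma connectedIn_symm {g : Network n} : Symmetric (connectedIn g) :=
  fun x y h => @Std.Symm.symm _ _
    (@Relation.ReflTransGen.stdSymm _ _ ⟨fun _ _ h => by rwa [Sym2.eq_swap] at h⟩) x y h

lemma connectedIn_mono {g h : Network n} (hgh : g ⊆ h) {i j : Fin n}
    (hc : connectedIn g i j) : connectedIn h i j :=
  Relation.ReflTransGen.mono (fun _ _ hx => hgh hx) _ _ hc

lemma conn_of_mem_mem {g : Network n} {e : Sym2 (Fin n)} (he : e ∈ g) {i j : Fin n}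
    (hi : i ∈ e) (hj : j ∈ e) : connectedIn g i j := by
  by_cases hij : i = j
  · subst hij; exact Relation.ReflTransGen.refl
  · have : e = s(i, j) := (Sym2.mem_and_mem_iff hij).mp ⟨hi, hj⟩
    exact Relation.ReflTransGen.single (this ▸ he)

lemma mem_component_iff {g : Network n} {e e' : Sym2 (Fin n)} :
    e' ∈ component g e ↔ e' ∈ g ∧ ∃ i ∈ e, ∃ j ∈ e', connectedIn g i j := by
  classical
  simp [component]

lemma self_mem_component {g : Network n} {e : Sym2 (Fin n)} (he : e ∈ g) :
    e ∈ component g e := by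
  induction e using Sym2.ind with
  | _ x y =>
    exact mem_component_iff.mpr ⟨he, x, Sym2.mem_mk_left x y, x, Sym2.mem_mk_left x y,
      Relation.ReflTransGen.refl⟩

lemma component_subset {g : Network n} {e : Sym2 (Fin n)} : component g e ⊆ g :=
  fun _ hx => (mem_component_iff.mp hx).1

lemma component_eq_of_mem {g : Network n} {e₁ e₂ : Sym2 (Fin n)} (h₁ : e₁ ∈ g)
    (h₂ : e₂ ∈ component g e₁) : component g e₁ = component g e₂ := by
  obtain ⟨he₂g, i, hi, j, hj, hij⟩ := mem_component_iff.mp h₂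
  ext e'
  simp only [mem_component_iff]
  constructor
  · rintro ⟨he', p, hp, q, hq, hpq⟩
    exact ⟨he', j, hj, q, hq, (connectedIn_symm hij).trans
      ((conn_of_mem_mem h₁ hi hp).trans hpq)⟩
  · rintro ⟨he', p, hp, q, hq, hpq⟩
    exact ⟨he', i, hi, q, hq, hij.trans ((conn_of_mem_mem he₂g hj hp).trans hpq)⟩

lemma sum_powerset_union' {α : Type*} [DecidableEq α] {s t : Finset α} (h : Disjoint s t)
    (f : Finset α → ℝ) :
    ∑ u ∈ (s ∪ t).powerset, f u = ∑ a ∈ s.powerset, ∑ b ∈ t.powerset, f (a ∪ b) := by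
  rw [← Finset.sum_product']
  apply Finset.sum_nbij' (i := fun u => (u ∩ s, u ∩ t)) (j := fun p => p.1 ∪ p.2)
  · intro u hu
    simp only [Finset.mem_product, Finset.mem_powerset]
    exact ⟨Finset.inter_subset_right, Finset.inter_subset_right⟩
  · intro p hp
    simp only [Finset.mem_product, Finset.mem_powerset] at hp ⊢
    exact Finset.union_subset_union hp.1 hp.2
  · intro u hu
    simp only [Finset.mem_powerset] at hu
    rw [← Finset.inter_union_distrib_left, Finset.inter_eq_left.mpr hu]
  · intro p hp
    simp only [Finset.mem_product, Finset.mem_powerset] at hp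
    have hd1 : Disjoint p.2 s := (h.symm.mono_left hp.2)
    have hd2 : Disjoint p.1 t := (h.mono_left hp.1)
    have h1 : (p.1 ∪ p.2) ∩ s = p.1 := by
      rw [Finset.union_inter_distrib_right, Finset.inter_eq_left.mpr hp.1,
        (Finset.disjoint_iff_inter_eq_empty.mp hd1), Finset.union_empty]
    have h2 : (p.1 ∪ p.2) ∩ t = p.2 := by
      rw [Finset.union_inter_distrib_right, Finset.inter_eq_left.mpr hp.2,
        (Finset.disjoint_iff_inter_eq_empty.mp hd2), Finset.empty_union]
    exact Prod.ext h1 h2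
  · intro u hu
    simp only [Finset.mem_powerset] at hu
    rw [← Finset.inter_union_distrib_left, Finset.inter_eq_left.mpr hu]

lemma neg_one_pow_sub_real {m k : ℕ} (h : k ≤ m) :
    ((-1 : ℝ)) ^ (m - k) = (-1) ^ m * (-1) ^ k := by
  rw [pow_sub₀ (-1 : ℝ) (by norm_num) h, ← inv_pow, inv_neg, inv_one]

lemma alt_sum_powerset_zero {α : Type*} [DecidableEq α] {s : Finset α} (hs : s.Nonempty) :
    ∑ a ∈ s.powerset, ((-1 : ℝ)) ^ (s.card - a.card) = 0 := by
  have h0 : ((∑ m ∈ s.powerset, (-1 : ℤ) ^ m.card : ℤ) : ℝ) = 0 := by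
    rw [Finset.sum_powerset_neg_one_pow_card_of_nonempty hs]; norm_num
  push_cast at h0
  calc ∑ a ∈ s.powerset, ((-1 : ℝ)) ^ (s.card - a.card)
      = ∑ a ∈ s.powerset, (-1 : ℝ) ^ s.card * (-1) ^ a.card := by
        refine Finset.sum_congr rfl fun a ha => ?_
        exact neg_one_pow_sub_real (Finset.card_le_card (Finset.mem_powerset.mp ha))
    _ = (-1 : ℝ) ^ s.card * ∑ a ∈ s.powerset, (-1 : ℝ) ^ a.card := by
        rw [Finset.mul_sum]
    _ = 0 := by rw [h0, mul_zero]

/-- For component additive value functions, the Harsanyi dividend vanishes at any network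
containing two links in two different components. -/
theorem dividend_eq_zero_of_two_components (v : Network n → ℝ)
    (hv : componentAdditive v) (g' : Network n) (e₁ e₂ : Sym2 (Fin n))
    (he₁ : e₁ ∈ g') (he₂ : e₂ ∈ g') (hne : component g' e₁ ≠ component g' e₂) :
    dividend v g' = 0 := by
  classical
  set A : Network n := component g' e₁ with hA
  set B : Network n := g' \ A with hB
  have hAsub : A ⊆ g' := component_subset
  have hABdisj : Disjoint A B := Finset.disjoint_sdiff
  have hAB : A ∪ B = g' := Finset.union_sdiff_of_subset hAsub
  -- the "side" predicate
  set P : Fin n → Prop := fun i => ∃ p ∈ e₁, connectedIn g' p i with hP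
  have hPstep : ∀ {i k : Fin n}, P i → s(i, k) ∈ g' → P k := by
    rintro i k ⟨p, hp, hpi⟩ hstep
    exact ⟨p, hp, hpi.tail hstep⟩
  have hPall : ∀ e' ∈ g', ∀ j ∈ e', P j → ∀ k ∈ e', P k := by
    intro e' he' j hj hPj k hk
    by_cases hjk : j = k
    · exact hjk ▸ hPj
    · have he : e' = s(j, k) := (Sym2.mem_and_mem_iff hjk).mp ⟨hj, hk⟩
      exact hPstep hPj (he ▸ he')
  have memA_iff : ∀ e' ∈ g', (e' ∈ A ↔ ∃ j ∈ e', P j) := by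
    intro e' he'
    rw [hA, mem_component_iff]
    constructor
    · rintro ⟨_, i, hi, j, hj, hc⟩; exact ⟨j, hj, i, hi, hc⟩
    · rintro ⟨j, hj, p, hp, hc⟩; exact ⟨he', p, hp, j, hj, hc⟩
  have he₁A : e₁ ∈ A := self_mem_component he₁
  have he₂B : e₂ ∈ B := by
    rw [hB, Finset.mem_sdiff]
    refine ⟨he₂, fun hmem => hne (component_eq_of_mem he₁ hmem)⟩
  -- the key splitting lemma
  have hsplit : ∀ a ∈ A.powerset, ∀ b ∈ B.powerset, v (a ∪ b) = v a + v b := by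
    intro a ha b hb
    rw [Finset.mem_powerset] at ha hb
    have habg : a ∪ b ⊆ g' := by
      rw [← hAB]; exact Finset.union_subset_union ha hb
    -- paths starting on the A side stay in a
    have pathA : ∀ {i j : Fin n}, connectedIn (a ∪ b) i j → P i → connectedIn a i j ∧ P j := by
      intro i j hc hPi
      induction hc with
      | refl => exact ⟨Relation.ReflTransGen.refl, hPi⟩
      | @tail j' j hc' hstep ih =>
        obtain ⟨hca, hPj'⟩ := ih
        have hedge : s(j', j) ∈ g' := habg hstep
        have hedgeA : s(j', j) ∈ A :=
          (memA_iff _ hedge).mpr ⟨j', Sym2.mem_mk_left _ _, hPj'⟩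
        have hedgea : s(j', j) ∈ a := by
          rcases Finset.mem_union.mp hstep with h | h
          · exact h
          · exact absurd hedgeA (Finset.mem_sdiff.mp (hb h)).2
        exact ⟨hca.tail hedgea, hPstep hPj' hedge⟩
    -- paths starting on the B side stay in b
    have pathB : ∀ {i j : Fin n}, connectedIn (a ∪ b) i j → ¬ P i →
        connectedIn b i j ∧ ¬ P j := by
      intro i j hc hPi
      induction hc with
      | refl => exact ⟨Relation.ReflTransGen.refl, hPi⟩
      | @tail j' j hc' hstep ih =>
        obtain ⟨hcb, hnPj'⟩ := ih
        have hedge : s(j', j) ∈ g' := habg hstep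
        have hedgeb : s(j', j) ∈ b := by
          rcases Finset.mem_union.mp hstep with h | h
          · exfalso
            obtain ⟨k, hk, hPk⟩ := (memA_iff _ hedge).mp (ha h)
            exact hnPj' (hPall _ hedge k hk hPk j' (Sym2.mem_mk_left _ _))
          · exact h
        refine ⟨hcb.tail hedgeb, fun hPj => hnPj' ?_⟩
        exact hPstep hPj (by rwa [Sym2.eq_swap] at hedge)
    have hPofA : ∀ e ∈ a, ∀ i ∈ e, P i := by
      intro e he i hi
      obtain ⟨j, hj, hPj⟩ := (memA_iff e (habg (Finset.mem_union_left b he))).mp (ha he)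
      exact hPall e (habg (Finset.mem_union_left b he)) j hj hPj i hi
    have hnPofB : ∀ e ∈ b, ∀ i ∈ e, ¬ P i := by
      intro e he i hi hPi
      have heg : e ∈ g' := habg (Finset.mem_union_right a he)
      have : e ∈ A := (memA_iff e heg).mpr ⟨i, hi, hPi⟩
      exact (Finset.mem_sdiff.mp (hb he)).2 this
    -- components of the union
    have compA : ∀ e ∈ a, component (a ∪ b) e = component a e := by
      intro e he
      ext e'
      simp only [mem_component_iff]
      constructor
      · rintro ⟨he', i, hi, j, hj, hc⟩
        obtain ⟨hca, hPj⟩ := pathA hc (hPofA e he i hi)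
        have he'g : e' ∈ g' := habg he'
        have he'a : e' ∈ a := by
          rcases Finset.mem_union.mp he' with h | h
          · exact h
          · exact absurd ((memA_iff _ he'g).mpr ⟨j, hj, hPj⟩)
              (Finset.mem_sdiff.mp (hb h)).2
        exact ⟨he'a, i, hi, j, hj, hca⟩
      · rintro ⟨he', i, hi, j, hj, hc⟩
        exact ⟨Finset.mem_union_left b he', i, hi, j, hj,
          connectedIn_mono Finset.subset_union_left hc⟩
    have compB : ∀ e ∈ b, component (a ∪ b) e = component b e := by
      intro e he
      ext e'
      simp only [mem_component_iff]
      constructor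
      · rintro ⟨he', i, hi, j, hj, hc⟩
        obtain ⟨hcb, hnPj⟩ := pathB hc (hnPofB e he i hi)
        have he'b : e' ∈ b := by
          rcases Finset.mem_union.mp he' with h | h
          · exact absurd (hPofA _ h j hj) hnPj
          · exact h
        exact ⟨he'b, i, hi, j, hj, hcb⟩
      · rintro ⟨he', i, hi, j, hj, hc⟩
        exact ⟨Finset.mem_union_right a he', i, hi, j, hj,
          connectedIn_mono Finset.subset_union_right hc⟩
    have hcomps : components (a ∪ b) = components a ∪ components b := by
      rw [components, components, components, Finset.image_union]
      congr 1
      · exact Finset.image_congr compA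
      · exact Finset.image_congr compB
    have hdisj : Disjoint (components a) (components b) := by
      rw [Finset.disjoint_left]
      rintro h hha hhb
      obtain ⟨ea, hea, rfl⟩ := Finset.mem_image.mp hha
      obtain ⟨eb, heb, heq⟩ := Finset.mem_image.mp hhb
      have h1 : ea ∈ component a ea := self_mem_component hea
      have h2 : ea ∈ component b eb := by rw [heq]; exact h1
      have h3 : ea ∈ b := component_subset h2
      induction ea using Sym2.ind with
      | _ x y =>
        exact hnPofB _ h3 x (Sym2.mem_mk_left x y) (hPofA _ hea x (Sym2.mem_mk_left x y))
    rw [hv (a ∪ b), hcomps, Finset.sum_union hdisj, ← hv a, ← hv b]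
  -- now the computation
  have hcardAB : ∀ a ∈ A.powerset, ∀ b ∈ B.powerset,
      g'.card - (a ∪ b).card = (A.card - a.card) + (B.card - b.card) := by
    intro a ha b hb
    rw [Finset.mem_powerset] at ha hb
    have hdab : Disjoint a b := hABdisj.mono ha hb
    have h1 := Finset.card_le_card ha
    have h2 := Finset.card_le_card hb
    rw [Finset.card_union_of_disjoint hdab, ← hAB, Finset.card_union_of_disjoint hABdisj]
    omega
  unfold dividend
  rw [← hAB, sum_powerset_union' hABdisj]
  have key : ∀ a ∈ A.powerset, ∀ b ∈ B.powerset,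
      (-1 : ℝ) ^ ((A ∪ B).card - (a ∪ b).card) * v (a ∪ b)
      = ((-1 : ℝ) ^ (A.card - a.card) * (-1) ^ (B.card - b.card)) * (v a + v b) := by
    intro a ha b hb
    rw [hsplit a ha b hb, hAB, hcardAB a ha b hb, pow_add]
  calc ∑ a ∈ A.powerset, ∑ b ∈ B.powerset,
        (-1 : ℝ) ^ ((A ∪ B).card - (a ∪ b).card) * v (a ∪ b)
      = ∑ a ∈ A.powerset, ∑ b ∈ B.powerset,
        ((-1 : ℝ) ^ (A.card - a.card) * (-1) ^ (B.card - b.card)) * (v a + v b) := by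
        refine Finset.sum_congr rfl fun a ha => Finset.sum_congr rfl fun b hb => ?_
        exact key a ha b hb
    _ = (∑ a ∈ A.powerset, (-1 : ℝ) ^ (A.card - a.card) * v a)
          * (∑ b ∈ B.powerset, (-1 : ℝ) ^ (B.card - b.card))
        + (∑ a ∈ A.powerset, (-1 : ℝ) ^ (A.card - a.card))
          * (∑ b ∈ B.powerset, (-1 : ℝ) ^ (B.card - b.card) * v b) := by
        rw [Finset.sum_mul_sum, Finset.sum_mul_sum, ← Finset.sum_add_distrib]
        refine Finset.sum_congr rfl fun a ha => ?_
        rw [← Finset.sum_add_distrib]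
        refine Finset.sum_congr rfl fun b hb => ?_
        ring
    _ = 0 := by
        rw [alt_sum_powerset_zero ⟨e₁, he₁A⟩, alt_sum_powerset_zero ⟨e₂, he₂B⟩,
          mul_zero, zero_mul, add_zero]
end

section
/- The weighted Myerson value satisfies Efficiency: for every network g, value function v, and positive weight vector w, Σ_{i ∈ N(g)} Y_i^{w-MV}(g,v) = v(g). -/
open Finset

variable {n : ℕ}

lemma mobius_inner_sum {α : Type*} [DecidableEq α] (g u : Finset α) (hu : u ⊆ g) :
    ∑ t ∈ g.powerset.filter (fun t => u ⊆ t), (-1:ℝ)^(t.card - u.card)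
      = if u = g then 1 else 0 := by
  have himg : g.powerset.filter (fun t => u ⊆ t) = (g \ u).powerset.image (fun s => u ∪ s) := by
    ext t
    simp only [mem_filter, mem_powerset, mem_image]
    constructor
    · rintro ⟨htg, hut⟩
      exact ⟨t \ u, sdiff_subset_sdiff htg Subset.rfl, Finset.union_sdiff_of_subset hut⟩
    · rintro ⟨s, hs, rfl⟩
      exact ⟨union_subset hu ((subset_sdiff.mp hs).1), subset_union_left⟩
  rw [himg, Finset.sum_image]
  · have hcard : ∀ s ∈ (g \ u).powerset, (u ∪ s).card - u.card = s.card := by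
      intro s hs
      rw [mem_powerset] at hs
      have hd : Disjoint u s := (subset_sdiff.mp hs).2.symm
      rw [Finset.card_union_of_disjoint hd]
      omega
    rw [Finset.sum_congr rfl (fun s hs => by rw [hcard s hs])]
    have hz : ∑ s ∈ (g \ u).powerset, (-1:ℝ)^s.card
        = ((∑ s ∈ (g \ u).powerset, (-1:ℤ)^s.card : ℤ) : ℝ) := by push_cast; rfl
    rw [hz, Finset.sum_powerset_neg_one_pow_card]
    by_cases h : u = g
    · simp [h]
    · have : g \ u ≠ ∅ := by
        intro he
        exact h (Subset.antisymm hu (sdiff_eq_empty_iff_subset.mp he))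
      simp [h, this]
  · intro s hs s' hs' heq
    rw [mem_coe, mem_powerset] at hs hs'
    have hd : Disjoint u s := (subset_sdiff.mp hs).2.symm
    have hd' : Disjoint u s' := (subset_sdiff.mp hs').2.symm
    calc s = (u ∪ s) \ u := by rw [Finset.union_sdiff_cancel_left hd]
    _ = (u ∪ s') \ u := by rw [show u ∪ s = u ∪ s' from heq]
    _ = s' := Finset.union_sdiff_cancel_left hd'

lemma sum_dividend (v : Network n → ℝ) (g : Network n) :
    ∑ g' ∈ g.powerset, dividend v g' = v g := by
  classical
  unfold dividend
  rw [Finset.sum_comm' (t' := g.powerset)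
      (s' := fun u => g.powerset.filter (fun t => u ⊆ t))
      (f := fun t u => (-1:ℝ)^(t.card - u.card) * v u)
      (by
        intro t u
        simp only [mem_powerset, mem_filter]
        constructor
        · rintro ⟨htg, hut⟩; exact ⟨⟨htg, hut⟩, hut.trans htg⟩
        · rintro ⟨⟨htg, hut⟩, _⟩; exact ⟨htg, hut⟩)]
  have : ∀ u ∈ g.powerset,
      ∑ t ∈ g.powerset.filter (fun t => u ⊆ t), (-1:ℝ)^(t.card - u.card) * v u
        = (if u = g then 1 else 0) * v u := by
    intro u hu
    rw [← Finset.sum_mul, mobius_inner_sum g u (mem_powerset.mp hu)]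
  rw [Finset.sum_congr rfl this]
  simp

lemma players_mono {g g' : Network n} (h : g' ⊆ g) : players g' ⊆ players g := by
  intro i hi
  simp only [players, mem_filter, mem_univ, true_and] at *
  obtain ⟨e, he, hie⟩ := hi
  exact ⟨e, h he, hie⟩

lemma players_eq_empty_iff (g : Network n) : players g = ∅ ↔ g = ∅ := by
  constructor
  · intro h
    by_contra hg
    obtain ⟨e, he⟩ := Finset.nonempty_iff_ne_empty.mpr hg
    have : e.out.1 ∈ players g := by
      simp only [players, mem_filter, mem_univ, true_and]
      exact ⟨e, he, Sym2.out_fst_mem e⟩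
    rw [h] at this
    exact absurd this (Finset.notMem_empty _)
  · rintro rfl
    simp [players]

lemma dividend_empty (v : Network n → ℝ) : dividend v ∅ = v ∅ := by
  simp [dividend]

/-- The weighted Myerson value is efficient. -/
theorem wMV_efficient (w : Fin n → ℝ) (hw : ∀ i, 0 < w i)
    (v : Network n → ℝ) (hv : v ∅ = 0) (g : Network n) :
    ∑ i ∈ players g, wMV w v g i = v g := by
  classical
  unfold wMV
  rw [Finset.sum_comm' (t' := g.powerset)
      (s' := fun g' => players g')
      (f := fun i g' => (w i / ∑ j ∈ players g', w j) * dividend v g')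
      (by
        intro i g'
        simp only [mem_filter]
        constructor
        · rintro ⟨_, hg', hi⟩; exact ⟨hi, hg'⟩
        · rintro ⟨hi, hg'⟩
          exact ⟨players_mono (mem_powerset.mp hg') hi, hg', hi⟩)]
  rw [← sum_dividend v g]
  apply Finset.sum_congr rfl
  intro g' hg'
  by_cases h : g' = ∅
  · subst h
    simp [players_eq_empty_iff, dividend_empty, hv]
  · have hne : (players g').Nonempty := by
      rw [Finset.nonempty_iff_ne_empty]
      intro he
      exact h ((players_eq_empty_iff g').mp he)
    have hpos : 0 < ∑ j ∈ players g', w j :=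
      Finset.sum_pos (fun j _ => hw j) hne
    rw [← Finset.sum_mul, ← Finset.sum_div, div_self (ne_of_gt hpos), one_mul]
end

section
/- The weighted Myerson value satisfies Weighted Bargaining Power: for every network g, value function v, positive weight vector w, and all players i,j with ij ∈ g, w_j [Y_i^{w-MV}(g,v) − Y_i^{w-MV}(g−ij,v)] = w_i [Y_j^{w-MV}(g,v) − Y_j^{w-MV}(g−ij,v)]. -/
open Finset

variable {n : ℕ}

/-!
Removing the link `ij` from `g` removes exactly the subnetworks `g' ⊆ g` that contain `ij`, so
a player's loss is the sum of her shares of the dividends of those `g'`. Both `i` and `j` are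
players of every such `g'`, and the dividend of `g'` is split among its players in proportion
to their weights with a common denominator; hence the losses of `i` and `j` are in the ratio
`w i : w j`, term by term.
-/

theorem Finset.powerset_erase_eq_filter {α : Type*} [DecidableEq α] (s : Finset α) (a : α) :
    (s.erase a).powerset = s.powerset.filter (fun t => a ∉ t) := by
  ext t
  simp [subset_erase]

theorem mem_players_of_mem {g : Network n} {e : Sym2 (Fin n)} {i : Fin n} (he : e ∈ g)
    (hi : i ∈ e) : i ∈ players g := by
  simp only [players, mem_filter, mem_univ, true_and]
  exact ⟨e, he, hi⟩

theorem wMV_sub_wMV_erase (w : Fin n → ℝ) (v : Network n → ℝ) (g : Network n)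
    {e : Sym2 (Fin n)} {i : Fin n} (hi : i ∈ e) :
    wMV w v g i - wMV w v (g.erase e) i =
      ∑ g' ∈ g.powerset.filter (fun g' => e ∈ g'),
        (w i / ∑ k ∈ players g', w k) * dividend v g' := by
  unfold wMV
  rw [powerset_erase_eq_filter, filter_filter, sum_filter, sum_filter, sum_filter,
    ← sum_sub_distrib]
  refine sum_congr rfl fun g' _ => ?_
  by_cases he : e ∈ g'
  · simp [he, mem_players_of_mem he hi]
  · simp [he]

theorem wMV_weightedBargainingPower_general (w : Fin n → ℝ)
    (v : Network n → ℝ) (g : Network n) (i j : Fin n) :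
    w j * (wMV w v g i - wMV w v (g.erase s(i, j)) i) =
      w i * (wMV w v g j - wMV w v (g.erase s(i, j)) j) := by
  rw [wMV_sub_wMV_erase w v g (Sym2.mem_mk_left i j),
    wMV_sub_wMV_erase w v g (Sym2.mem_mk_right i j), mul_sum, mul_sum]
  exact sum_congr rfl fun g' _ => by ring

/-- The weighted Myerson value satisfies Weighted Bargaining Power. -/
theorem wMV_weightedBargainingPower (w : Fin n → ℝ) (hw : ∀ k, 0 < w k)
    (v : Network n → ℝ) (hv : v ∅ = 0) (g : Network n) (i j : Fin n)
    (hij : s(i, j) ∈ g) :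
    w j * (wMV w v g i - wMV w v (g.erase s(i, j)) i) =
      w i * (wMV w v g j - wMV w v (g.erase s(i, j)) j) :=
  wMV_weightedBargainingPower_general w v g i j
end

section
/- If a value function v is Network Specific Player Anonymous on g (i.e., v(g|_S) = 0 for all proper subsets S ⊂ N), then the weighted Myerson value satisfies Y_i^{w-MV}(g,v) = (w_i / Σ_{j ∈ N(g)} w_j) · v(g) for each i ∈ N(g); in particular there exists α ∈ ℝ with Y_i^{w-MV}(g,v) = α w_i for all i ∈ N(g). -/
/-!
Group the Harsanyi dividends of the subnetworks of `g` by their player sets: write `D(S)`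
(`coalitionDividend`) for the total dividend of the subnetworks `g' ⊆ g` with `N(g') = S`.
Möbius inversion of the dividends gives `∑_{T ⊆ S} D(T) = v(g|_S)`, so if `v(g|_S) = 0` for
every `S ⊂ N(g)`, strong induction on `S` kills every `D(S)` with `S ⊂ N(g)` and leaves
`D(N(g)) = v(g)`. In the weighted Myerson value of `i`, the dividends with player set `T` are
paid out with the common share `w_i / ∑_{j ∈ T} w_j`, so only the term `T = N(g)` survives.
-/

open Finset

variable {n : ℕ}

lemma mem_players {g : Network n} {i : Fin n} : i ∈ players g ↔ ∃ e ∈ g, i ∈ e := by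
  simp [players]

lemma subset_restrict_iff {g g' : Network n} {S : Finset (Fin n)} (hg' : g' ⊆ g) :
    g' ⊆ restrict g S ↔ players g' ⊆ S := by
  constructor
  · intro h i hi
    obtain ⟨e, he, hie⟩ := mem_players.1 hi
    exact (mem_filter.1 (h he)).2 i hie
  · intro h e he
    exact mem_filter.2 ⟨hg' he, fun i hie => h (mem_players.2 ⟨e, he, hie⟩)⟩

lemma restrict_players_self (g : Network n) : restrict g (players g) = g :=
  filter_true_of_mem fun e he _ hie => mem_players.2 ⟨e, he, hie⟩

lemma sum_Icc_neg_one_pow_card_sub {α R : Type*} [DecidableEq α] [Ring R] {s t : Finset α}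
    (hst : s ⊆ t) : ∑ u ∈ Icc s t, (-1 : R) ^ (#u - #s) = if s = t then 1 else 0 := by
  have hinj : Set.InjOn (s ∪ ·) (t \ s).powerset := fun u hu u' hu' huu' => by
    rw [coe_powerset, Set.mem_preimage, Set.mem_powerset_iff, coe_subset] at hu hu'
    rw [← union_sdiff_cancel_left (disjoint_of_subset_right hu disjoint_sdiff),
      ← union_sdiff_cancel_left (disjoint_of_subset_right hu' disjoint_sdiff)]
    exact congrArg (· \ s) huu'
  rw [Icc_eq_image_powerset hst, sum_image hinj]
  calc ∑ u ∈ (t \ s).powerset, (-1 : R) ^ (#(s ∪ u) - #s)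
      = ((∑ u ∈ (t \ s).powerset, (-1 : ℤ) ^ #u : ℤ) : R) := by
        push_cast
        refine sum_congr rfl fun u hu => ?_
        rw [card_union_of_disjoint (disjoint_of_subset_right (mem_powerset.1 hu) disjoint_sdiff),
          Nat.add_sub_cancel_left]
    _ = if s = t then 1 else 0 := by
        have hempty : t \ s = ∅ ↔ s = t :=
          sdiff_eq_empty_iff_subset.trans ⟨subset_antisymm hst, fun h => h ▸ subset_refl s⟩
        rw [sum_powerset_neg_one_pow_card]
        simp only [hempty]
        split_ifs <;> simp

lemma sum_powerset_dividend (v : Network n → ℝ) (h : Network n) :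
    ∑ g' ∈ h.powerset, dividend v g' = v h := by
  unfold dividend
  rw [sum_comm' (t' := h.powerset) (s' := fun g'' => Icc g'' h) fun g' g'' => by
    simp only [mem_powerset, mem_Icc]
    exact ⟨fun ⟨h₁, h₂⟩ => ⟨⟨h₂, h₁⟩, h₂.trans h₁⟩, fun ⟨⟨h₁, h₂⟩, _⟩ => ⟨h₂, h₁⟩⟩]
  simp_rw [← sum_mul]
  rw [sum_congr rfl fun g'' hg'' => by rw [sum_Icc_neg_one_pow_card_sub (mem_powerset.1 hg'')]]
  simp [ite_mul]

noncomputable def coalitionDividend (v : Network n → ℝ) (g : Network n) (S : Finset (Fin n)) :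
    ℝ :=
  ∑ g' ∈ g.powerset with players g' = S, dividend v g'

lemma sum_powerset_coalitionDividend (v : Network n → ℝ) (g : Network n) (S : Finset (Fin n)) :
    ∑ T ∈ S.powerset, coalitionDividend v g T = v (restrict g S) := by
  have hmaps : ∀ g' ∈ (restrict g S).powerset, players g' ∈ S.powerset := fun g' hg' =>
    have hg'g : g' ⊆ g := (mem_powerset.1 hg').trans (filter_subset _ _)
    mem_powerset.2 ((subset_restrict_iff hg'g).1 (mem_powerset.1 hg'))
  rw [← sum_powerset_dividend v, ← sum_fiberwise_of_maps_to hmaps]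
  refine sum_congr rfl fun T hT => sum_congr ?_ fun _ _ => rfl
  ext g'
  simp only [mem_filter, mem_powerset]
  constructor
  · rintro ⟨hg'g, rfl⟩
    exact ⟨(subset_restrict_iff hg'g).2 (mem_powerset.1 hT), rfl⟩
  · rintro ⟨hg'S, hg'T⟩
    exact ⟨hg'S.trans (filter_subset _ _), hg'T⟩

lemma coalitionDividend_eq_sub (v : Network n → ℝ) (g : Network n) (S : Finset (Fin n)) :
    coalitionDividend v g S
      = v (restrict g S) - ∑ T ∈ S.ssubsets, coalitionDividend v g T := by
  rw [← sum_powerset_coalitionDividend v, ← add_sum_erase _ _ (mem_powerset_self S), ssubsets,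
    add_sub_cancel_right]

section Vanishing

variable {v : Network n → ℝ} {g : Network n} {U : Finset (Fin n)}

lemma coalitionDividend_eq_zero_of_ssubset (hU : ∀ S ⊂ U, v (restrict g S) = 0)
    {S : Finset (Fin n)} (hS : S ⊂ U) : coalitionDividend v g S = 0 := by
  induction S using strongInduction with
  | _ S ih =>
    rw [coalitionDividend_eq_sub, hU S hS, zero_sub, neg_eq_zero]
    exact sum_eq_zero fun T hT => ih T (mem_ssubsets.1 hT) ((mem_ssubsets.1 hT).trans hS)

lemma coalitionDividend_eq_of_ssubset (hU : ∀ S ⊂ U, v (restrict g S) = 0) :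
    coalitionDividend v g U = v (restrict g U) := by
  rw [coalitionDividend_eq_sub, sub_eq_self]
  exact sum_eq_zero fun T hT => coalitionDividend_eq_zero_of_ssubset hU (mem_ssubsets.1 hT)

end Vanishing

lemma wMV_eq_sum_coalitionDividend (w : Fin n → ℝ) (v : Network n → ℝ) (g : Network n)
    (i : Fin n) :
    wMV w v g i = ∑ T ∈ (players g).powerset with i ∈ T,
      w i / (∑ j ∈ T, w j) * coalitionDividend v g T := by
  have hmaps : ∀ g' ∈ g.powerset.filter (fun g' => i ∈ players g'),
      players g' ∈ (players g).powerset.filter (i ∈ ·) := fun g' hg' => by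
    rw [mem_filter, mem_powerset] at hg' ⊢
    exact ⟨players_mono hg'.1, hg'.2⟩
  rw [wMV, ← sum_fiberwise_of_maps_to hmaps]
  refine sum_congr rfl fun T hT => ?_
  rw [coalitionDividend, mul_sum, filter_filter]
  refine sum_congr (filter_congr fun g' _ => ?_) fun g' hg' => by rw [(mem_filter.1 hg').2]
  constructor
  · exact fun h => h.2
  · rintro rfl
    exact ⟨(mem_filter.1 hT).2, rfl⟩

theorem wMV_networkSpecificPlayerAnonymity_general (w : Fin n → ℝ)
    (v : Network n → ℝ) (g : Network n)
    (hNSPA : ∀ S : Finset (Fin n), S ⊂ Finset.univ → v (restrict g S) = 0) :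
    (∀ i ∈ players g, wMV w v g i = w i / (∑ j ∈ players g, w j) * v g) ∧
    ∃ α : ℝ, ∀ i ∈ players g, wMV w v g i = α * w i := by
  have hvanish : ∀ S ⊂ players g, v (restrict g S) = 0 := fun S hS =>
    hNSPA S (hS.trans_subset (subset_univ _))
  have hshare : ∀ i ∈ players g, wMV w v g i = w i / (∑ j ∈ players g, w j) * v g := by
    intro i hi
    rw [wMV_eq_sum_coalitionDividend, sum_eq_single_of_mem (players g) (by simp [hi]),
      coalitionDividend_eq_of_ssubset hvanish, restrict_players_self]
    intro T hT hne
    have hTg : T ⊂ players g := (mem_powerset.1 (mem_filter.1 hT).1).ssubset_of_ne hne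
    rw [coalitionDividend_eq_zero_of_ssubset hvanish hTg, mul_zero]
  exact ⟨hshare, v g / ∑ j ∈ players g, w j, fun i hi => by rw [hshare i hi]; ring⟩

/-- On Network Specific Player Anonymous value functions the weighted Myerson value
pays each active player proportionally to her weight. -/
theorem wMV_networkSpecificPlayerAnonymity (w : Fin n → ℝ) (hw : ∀ k, 0 < w k)
    (v : Network n → ℝ) (hv : v ∅ = 0) (g : Network n)
    (hNSPA : ∀ S : Finset (Fin n), S ⊂ Finset.univ → v (restrict g S) = 0) :
    (∀ i ∈ players g, wMV w v g i = w i / (∑ j ∈ players g, w j) * v g) ∧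
    ∃ α : ℝ, ∀ i ∈ players g, wMV w v g i = α * w i :=
  wMV_networkSpecificPlayerAnonymity_general w v g hNSPA
end

section
/- The allocation rule Y(g,v) defined by Y_i(g,v) = v(g)/n(g) for i ∈ N(g) (and 0 otherwise) satisfies Efficiency, Additivity, and Network Specific Player Anonymity for constant weights, but does not satisfy the Superfluous Link Property in general. -/
open Finset

variable {n : ℕ}

/-- The equal-division-among-active-players rule. -/
noncomputable def Yeq {n : ℕ} (g : Network n) (v : Network n → ℝ) (i : Fin n) : ℝ :=
  if i ∈ players g then v g / (players g).card else 0

/-- `Yeq` satisfies Efficiency, Additivity and Network Specific Player Anonymity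
(for constant weights), but not the Superfluous Link Property. -/
theorem Yeq_properties :
    (∀ (n : ℕ) (g : Network n) (v : Network n → ℝ), v ∅ = 0 →
      ∑ i ∈ players g, Yeq g v i = v g) ∧
    (∀ (n : ℕ) (g : Network n) (v v' : Network n → ℝ) (i : Fin n),
      Yeq g (fun g' => v g' + v' g') i = Yeq g v i + Yeq g v' i) ∧
    (∀ (n : ℕ) (c : ℝ), 0 < c →
      ∀ (g : Network n) (v : Network n → ℝ), v ∅ = 0 →
        (∀ S : Finset (Fin n), S ⊂ Finset.univ → v (restrict g S) = 0) →
        ∃ α : ℝ, ∀ i ∈ players g, Yeq g v i = α * c) ∧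
    ¬ (∀ (n : ℕ) (g : Network n) (v : Network n → ℝ), v ∅ = 0 →
        ∀ l ∈ g, (∀ g' ⊆ g, l ∈ g' → v g' = v (g'.erase l)) →
          ∀ i : Fin n, Yeq g v i = Yeq (g.erase l) v i) := by
  
  refine ⟨?_, ?_, ?_, ?_⟩
  · intro n g v hv
    by_cases h : players g = ∅
    · have hg : g = ∅ := by
        by_contra hg
        obtain ⟨e, he⟩ := Finset.nonempty_iff_ne_empty.2 hg
        induction e using Sym2.ind with
        | _ a b =>
          have : a ∈ players g := by
            simp only [players, Finset.mem_filter, Finset.mem_univ, true_and]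
            exact ⟨s(a,b), he, by simp⟩
          rw [h] at this; exact absurd this (Finset.notMem_empty a)
      rw [h, hg, hv]; simp
    · have hne : (players g).Nonempty := Finset.nonempty_iff_ne_empty.2 h
      have hc : ((players g).card : ℝ) ≠ 0 := by
        exact_mod_cast Finset.card_ne_zero_of_mem hne.choose_spec
      unfold Yeq
      rw [Finset.sum_congr rfl (fun i hi => if_pos hi)]
      rw [Finset.sum_const, nsmul_eq_mul]
      field_simp
  · intro n g v v' i
    unfold Yeq
    split
    · ring
    · ring
  · intro n c hc g v hv hrest
    refine ⟨v g / ((players g).card * c), fun i hi => ?_⟩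
    rw [Yeq, if_pos hi]
    have hcard : ((players g).card : ℝ) ≠ 0 := by
      exact_mod_cast Finset.card_ne_zero_of_mem hi
    field_simp
  · intro H
    set l : Sym2 (Fin 3) := s(1, 2) with hl
    set g : Network 3 := {s(0, 1), s(1, 2)} with hgdef
    set v : Network 3 → ℝ := fun g' => if s((0:Fin 3), 1) ∈ g' then 1 else 0 with hvdef
    have h0 : v ∅ = 0 := by simp [hvdef]
    have hlg : l ∈ g := by simp [hgdef, hl]
    have hsup : ∀ g' ⊆ g, l ∈ g' → v g' = v (g'.erase l) := by
      intro g' _ _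
      simp only [hvdef]
      congr 1
      simp only [Finset.mem_erase, eq_iff_iff]
      constructor
      · intro h; exact ⟨by decide, h⟩
      · intro h; exact h.2
    have := H 3 g v h0 l hlg hsup 0
    rw [Yeq, Yeq] at this
    have hp1 : players g = Finset.univ := by decide
    have hp2 : players (g.erase l) = {0, 1} := by decide
    rw [hp1, hp2] at this
    have hv1 : v g = 1 := by
      simp only [hvdef]; rw [if_pos]; decide
    have hv2 : v (g.erase l) = 1 := by
      simp only [hvdef]; rw [if_pos]; decide
    rw [hv1, hv2] at this
    simp only [Finset.mem_univ, if_pos] at this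
    rw [if_pos (by decide)] at this
    rw [show (Finset.univ : Finset (Fin 3)).card = 3 from by decide,
        show ({0,1} : Finset (Fin 3)).card = 2 from by decide] at this
    norm_num at this
end

section
/- For every positive weight vector w and value function v, the weighted player potential function is unique: if Q^w satisfies Q^w(∅,v)=0 and Σ_{i∈N(g)} w_i (Q^w(g,v) − Q^w(g\g_i,v)) = v(g) for all g, then Q^w is uniquely determined, via the recursion Q^w(g,v) = (1/Σ_{i∈N(g)} w_i) [ v(g) + Σ_{i∈N(g)} w_i Q^w(g\g_i, v) ]. -/
open Finset

variable {n : ℕ}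

lemma players_nonempty {g : Network n} (hg : g ≠ ∅) : (players g).Nonempty := by
  obtain ⟨e, he⟩ := nonempty_iff_ne_empty.mpr hg
  exact ⟨e.out.1, by simpa [players] using ⟨e, he, Sym2.out_fst_mem e⟩⟩

lemma sdiff_glinks_ssubset {g : Network n} {i : Fin n} (hi : i ∈ players g) :
    g \ glinks g i ⊂ g := by
  obtain ⟨e, he, hie⟩ : ∃ e ∈ g, i ∈ e := by simpa [players] using hi
  exact sdiff_ssubset (filter_subset _ _) ⟨e, by simp [glinks, he, hie]⟩

lemma eq_one_div_sum_mul_of_sum_mul_sub_eq {ι : Type*} {s : Finset ι} {w b : ι → ℝ} {a c : ℝ}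
    (hw : ∑ i ∈ s, w i ≠ 0) (h : ∑ i ∈ s, w i * (a - b i) = c) :
    a = (1 / ∑ i ∈ s, w i) * (c + ∑ i ∈ s, w i * b i) := by
  have hsum : (∑ i ∈ s, w i) * a = c + ∑ i ∈ s, w i * b i := by
    rw [← h, sum_mul]
    simp only [mul_sub, sum_sub_distrib, mul_comm]
    ring
  field_simp
  linarith

section Potential

variable {w : Fin n → ℝ} {v Q : Network n → ℝ}

lemma potential_recursion (hw : ∀ k, 0 < w k)
    (hQ : ∀ g : Network n, ∑ i ∈ players g, w i * (Q g - Q (g \ glinks g i)) = v g)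
    {g : Network n} (hg : g ≠ ∅) :
    Q g = (1 / ∑ i ∈ players g, w i) * (v g + ∑ i ∈ players g, w i * Q (g \ glinks g i)) :=
  eq_one_div_sum_mul_of_sum_mul_sub_eq
    (sum_pos (fun i _ => hw i) (players_nonempty hg)).ne' (hQ g)

lemma potential_eq {Q' : Network n → ℝ} (hw : ∀ k, 0 < w k)
    (hQ0 : Q ∅ = 0)
    (hQ : ∀ g : Network n, ∑ i ∈ players g, w i * (Q g - Q (g \ glinks g i)) = v g)
    (hQ'0 : Q' ∅ = 0)
    (hQ' : ∀ g : Network n, ∑ i ∈ players g, w i * (Q' g - Q' (g \ glinks g i)) = v g) :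
    Q' = Q := by
  funext g
  induction g using Finset.strongInduction with
  | H g ih =>
    rcases eq_or_ne g ∅ with rfl | hg
    · rw [hQ0, hQ'0]
    · rw [potential_recursion hw hQ hg, potential_recursion hw hQ' hg]
      congr 2
      exact sum_congr rfl fun i hi => by rw [ih _ (sdiff_glinks_ssubset hi)]

end Potential

theorem potential_unique_general (w : Fin n → ℝ) (hw : ∀ k, 0 < w k)
    (v : Network n → ℝ)
    (Q : Network n → ℝ) (hQ0 : Q ∅ = 0)
    (hQ : ∀ g : Network n,
      ∑ i ∈ players g, w i * (Q g - Q (g \ glinks g i)) = v g) :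
    (∀ g : Network n, g ≠ ∅ →
      Q g = (1 / ∑ i ∈ players g, w i) *
        (v g + ∑ i ∈ players g, w i * Q (g \ glinks g i))) ∧
    (∀ Q' : Network n → ℝ, Q' ∅ = 0 →
      (∀ g : Network n,
        ∑ i ∈ players g, w i * (Q' g - Q' (g \ glinks g i)) = v g) →
      Q' = Q) :=
  ⟨fun _ hg => potential_recursion hw hQ hg,
    fun _ hQ'0 hQ' => potential_eq hw hQ0 hQ hQ'0 hQ'⟩

/-- The weighted player potential function is unique, via the recursion
`Q(g) = (1/Σ w_i)(v(g) + Σ w_i Q(g∖g_i))`. -/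
theorem potential_unique (w : Fin n → ℝ) (hw : ∀ k, 0 < w k)
    (v : Network n → ℝ) (hv : v ∅ = 0)
    (Q : Network n → ℝ) (hQ0 : Q ∅ = 0)
    (hQ : ∀ g : Network n,
      ∑ i ∈ players g, w i * (Q g - Q (g \ glinks g i)) = v g) :
    (∀ g : Network n, g ≠ ∅ →
      Q g = (1 / ∑ i ∈ players g, w i) *
        (v g + ∑ i ∈ players g, w i * Q (g \ glinks g i))) ∧
    (∀ Q' : Network n → ℝ, Q' ∅ = 0 →
      (∀ g : Network n,
        ∑ i ∈ players g, w i * (Q' g - Q' (g \ glinks g i)) = v g) →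
      Q' = Q) :=
  potential_unique_general w hw v Q hQ0 hQ
end

section
/- In the bidding mechanism of Hart–Mas-Colell type, if the payoff configuration (a^{g|_S}(ρ))_{S⊆N} satisfies conditions (a.1) a_i^{g|_S,i}(ρ) = v(g|_S) − Σ_{j≠i} a_j^{g|_S,i}(ρ) and (a.2) a_j^{g|_S,i}(ρ) = ρ a_j^{g|_S}(ρ) + (1−ρ) a_j^{g|_{S\i}}(ρ) for i≠j, where a^{g|_S}(ρ) = (Σ_{i∈S} w_i a^{g|_S,i}(ρ)) / (Σ_{i∈S} w_i), then a_i^{g|_S}(ρ) = (1/Σ_{j∈S} w_j) [ w_i (v(g|_S) − v(g|_{S\i})) + Σ_{j∈S,j≠i} w_j a_i^{g|_{S\j}}(ρ) ] for all i ∈ S ⊆ N. -/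
open Finset

variable {n : ℕ}

/-!
Each proposer's vector `a S i` sums to `v(g|_S)` by (a.1), hence so does the weighted average
`abar S`. Inserting (a.2) into `W · abar S i = Σ_k w_k a S k i` with `W = Σ_{k ∈ S} w_k`, the own
proposal `a S i i` becomes `(1 - ρ)(v(g|_S) - v(g|_{S∖i})) + ρ · abar S i` by this efficiency, and
the others contribute `ρ (W - w_i) abar S i + (1 - ρ) Σ_{k ≠ i} w_k abar (S∖k) i`. The `ρ`-terms
reassemble to `ρ · W · abar S i`, and cancelling the factor `1 - ρ ≠ 0` leaves the recursion.
-/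

theorem restrict_empty (g : Network n) : restrict g ∅ = ∅ := by
  rw [_root_.restrict, Finset.filter_eq_empty_iff]
  intro e _ h
  induction e using Sym2.ind with
  | _ x y => exact notMem_empty x (h x (Sym2.mem_mk_left x y))

section Bidding

variable {ι : Type*} {w : ι → ℝ}

theorem sum_weightedAverage_of_sum_eq {T : Finset ι} {x : ι → ι → ℝ} {c : ℝ}
    (hT : ∑ k ∈ T, w k ≠ 0) (hx : ∀ k ∈ T, ∑ j ∈ T, x k j = c) :
    ∑ j ∈ T, (∑ k ∈ T, w k * x k j) / ∑ k ∈ T, w k = c := by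
  rw [← sum_div, sum_comm, div_eq_iff hT, mul_sum]
  refine sum_congr rfl fun k hk => ?_
  rw [← mul_sum, hx k hk, mul_comm]

variable [DecidableEq ι] {V : Finset ι → ℝ} {ρ : ℝ} {a : Finset ι → ι → ι → ℝ}
  {abar : Finset ι → ι → ℝ}

theorem sum_proposal_eq_value {S : Finset ι} {i : ι} (hi : i ∈ S)
    (ha1 : a S i i = V S - ∑ j ∈ S.erase i, a S i j) :
    ∑ j ∈ S, a S i j = V S := by
  rw [← add_sum_erase S _ hi, ha1, sub_add_cancel]

theorem sum_abar_eq_value (hw : ∀ k, 0 < w k) (hV : V ∅ = 0)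
    (habar : ∀ (S : Finset ι) (j : ι), abar S j = (∑ i ∈ S, w i * a S i j) / ∑ i ∈ S, w i)
    (ha1 : ∀ S : Finset ι, ∀ i ∈ S, a S i i = V S - ∑ j ∈ S.erase i, a S i j)
    (T : Finset ι) : ∑ j ∈ T, abar T j = V T := by
  rcases T.eq_empty_or_nonempty with rfl | hT
  · rw [sum_empty, hV]
  · simp_rw [habar]
    exact sum_weightedAverage_of_sum_eq (sum_pos (fun k _ => hw k) hT).ne'
      fun k hk => sum_proposal_eq_value hk (ha1 T k hk)

theorem proposal_self_eq (heff : ∀ T, ∑ j ∈ T, abar T j = V T)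
    {S : Finset ι} {i : ι} (hi : i ∈ S)
    (ha1 : a S i i = V S - ∑ j ∈ S.erase i, a S i j)
    (ha2 : ∀ j ∈ S, j ≠ i → a S i j = ρ * abar S j + (1 - ρ) * abar (S.erase i) j) :
    a S i i = (1 - ρ) * (V S - V (S.erase i)) + ρ * abar S i := by
  have hothers : ∑ j ∈ S.erase i, abar S j = V S - abar S i := by
    rw [← heff S, ← add_sum_erase S _ hi, add_sub_cancel_left]
  have hsplit : ∑ j ∈ S.erase i, a S i j
      = ρ * ∑ j ∈ S.erase i, abar S j + (1 - ρ) * ∑ j ∈ S.erase i, abar (S.erase i) j := by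
    rw [mul_sum, mul_sum, ← sum_add_distrib]
    exact sum_congr rfl fun j hj => ha2 j (mem_of_mem_erase hj) (ne_of_mem_erase hj)
  rw [ha1, hsplit, hothers, heff]
  ring

theorem sum_erase_weight_mul_proposal {S : Finset ι} {i : ι}
    (ha2 : ∀ k ∈ S, k ≠ i → a S k i = ρ * abar S i + (1 - ρ) * abar (S.erase k) i) :
    ∑ k ∈ S.erase i, w k * a S k i
      = ρ * (∑ k ∈ S.erase i, w k) * abar S i
        + (1 - ρ) * ∑ k ∈ S.erase i, w k * abar (S.erase k) i := by
  rw [mul_sum, mul_sum, sum_mul, ← sum_add_distrib]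
  refine sum_congr rfl fun k hk => ?_
  rw [ha2 k (mem_of_mem_erase hk) (ne_of_mem_erase hk)]
  ring

theorem abar_eq_weighted_recursion (hw : ∀ k, 0 < w k) (hρ1 : ρ < 1) (hV : V ∅ = 0)
    (habar : ∀ (S : Finset ι) (j : ι), abar S j = (∑ i ∈ S, w i * a S i j) / ∑ i ∈ S, w i)
    (ha1 : ∀ S : Finset ι, ∀ i ∈ S, a S i i = V S - ∑ j ∈ S.erase i, a S i j)
    (ha2 : ∀ S : Finset ι, ∀ i ∈ S, ∀ j ∈ S, j ≠ i →
      a S i j = ρ * abar S j + (1 - ρ) * abar (S.erase i) j)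
    {S : Finset ι} {i : ι} (hi : i ∈ S) :
    abar S i = (1 / ∑ j ∈ S, w j) *
      (w i * (V S - V (S.erase i)) + ∑ j ∈ S.erase i, w j * abar (S.erase j) i) := by
  have hW : ∑ j ∈ S, w j ≠ 0 := (sum_pos (fun k _ => hw k) ⟨i, hi⟩).ne'
  have htotal : (∑ j ∈ S, w j) * abar S i = w i * a S i i + ∑ k ∈ S.erase i, w k * a S k i := by
    rw [habar, mul_div_cancel₀ _ hW]
    exact (add_sum_erase S _ hi).symm
  rw [proposal_self_eq (sum_abar_eq_value hw hV habar ha1) hi (ha1 S i hi) (ha2 S i hi),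
    sum_erase_weight_mul_proposal fun k hk hki => ha2 S k hk i hi hki.symm,
    sum_erase_eq_sub hi] at htotal
  rw [one_div, eq_inv_mul_iff_mul_eq₀ hW]
  exact mul_left_cancel₀ (sub_ne_zero.mpr hρ1.ne') (by linear_combination htotal)

end Bidding

theorem bidding_recursion_general (w : Fin n → ℝ) (hw : ∀ k, 0 < w k)
    (ρ : ℝ) (hρ1 : ρ < 1)
    (g : Network n) (v : Network n → ℝ) (hv : v ∅ = 0)
    (a : Finset (Fin n) → Fin n → Fin n → ℝ)
    (abar : Finset (Fin n) → Fin n → ℝ)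
    (habar : ∀ (S : Finset (Fin n)) (j : Fin n),
      abar S j = (∑ i ∈ S, w i * a S i j) / ∑ i ∈ S, w i)
    (ha1 : ∀ S : Finset (Fin n), ∀ i ∈ S,
      a S i i = v (restrict g S) - ∑ j ∈ S.erase i, a S i j)
    (ha2 : ∀ S : Finset (Fin n), ∀ i ∈ S, ∀ j ∈ S, j ≠ i →
      a S i j = ρ * abar S j + (1 - ρ) * abar (S.erase i) j) :
    ∀ S : Finset (Fin n), ∀ i ∈ S,
      abar S i = (1 / ∑ j ∈ S, w j) *
        (w i * (v (restrict g S) - v (restrict g (S.erase i))) +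
          ∑ j ∈ S.erase i, w j * abar (S.erase j) i) :=
  fun _ _ hi => abar_eq_weighted_recursion (V := fun S => v (restrict g S)) hw hρ1
    (by rw [restrict_empty, hv]) habar ha1 ha2 hi

/-- In the Hart–Mas-Colell type bidding mechanism, proposals satisfying (a.1) and (a.2)
yield weighted average proposals satisfying the weighted Myerson recursion. -/
theorem bidding_recursion (w : Fin n → ℝ) (hw : ∀ k, 0 < w k)
    (ρ : ℝ) (hρ0 : 0 ≤ ρ) (hρ1 : ρ < 1)
    (g : Network n) (v : Network n → ℝ) (hv : v ∅ = 0)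
    (a : Finset (Fin n) → Fin n → Fin n → ℝ)
    (abar : Finset (Fin n) → Fin n → ℝ)
    (habar : ∀ (S : Finset (Fin n)) (j : Fin n),
      abar S j = (∑ i ∈ S, w i * a S i j) / ∑ i ∈ S, w i)
    (ha1 : ∀ S : Finset (Fin n), ∀ i ∈ S,
      a S i i = v (restrict g S) - ∑ j ∈ S.erase i, a S i j)
    (ha2 : ∀ S : Finset (Fin n), ∀ i ∈ S, ∀ j ∈ S, j ≠ i →
      a S i j = ρ * abar S j + (1 - ρ) * abar (S.erase i) j) :
    ∀ S : Finset (Fin n), ∀ i ∈ S,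
      abar S i = (1 / ∑ j ∈ S, w j) *
        (w i * (v (restrict g S) - v (restrict g (S.erase i))) +
          ∑ j ∈ S.erase i, w j * abar (S.erase j) i) :=
  bidding_recursion_general w hw ρ hρ1 g v hv a abar habar ha1 ha2
end
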